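/- Let ξ ~ N(π, σ²) with σ > 0 and define τ̂(ξ) = (1/σ)·(1 − Φ(ξ/σ))/φ(ξ/σ). Then for every ε > 0 and every π ∈ ℝ, E[τ̂(ξ)^{1+ε}] = +∞. -/

import Mathlib

open MeasureTheory ProbabilityTheory Filter

/-- Standard normal density `φ`. -/
noncomputable def stdPDF (x : ℝ) : ℝ :=
  (Real.sqrt (2 * Real.pi))⁻¹ * Real.exp (-(x ^ 2) / 2)

/-- Standard normal CDF `Φ`. -/
noncomputable def stdCDF (x : ℝ) : ℝ := ∫ t in Set.Iic x, stdPDF t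

/-- Mills-ratio estimator `τ̂(x, σ²) = (1/σ)(1 − Φ(x/σ))/φ(x/σ)`. -/
noncomputable def millsTau (σ x : ℝ) : ℝ :=
  (1 / σ) * (1 - stdCDF (x / σ)) / stdPDF (x / σ)

/-!
For `x ≤ 0` we have `Φ(x/σ) ≤ 1/2`, so `τ̂(x) ≥ 1 / (2σ φ(x/σ))` grows like `exp (x² / (2σ²))`.
Against the `N(π, σ²)` density, which decays like `exp (-(x - π)² / (2σ²))`, the integrand
`τ̂^{1+ε}` therefore contributes `exp ((ε x² + 2π x - π²) / (2σ²)) → ∞` as `x → -∞`,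
and a function tending to `∞` at `-∞` has infinite Lebesgue integral.
-/

open scoped ENNReal NNReal Topology

lemma stdPDF_eq_gaussianPDFReal : stdPDF = gaussianPDFReal 0 1 := by
  ext x
  simp [stdPDF, gaussianPDFReal, neg_div]

lemma integrable_stdPDF : Integrable stdPDF :=
  stdPDF_eq_gaussianPDFReal ▸ integrable_gaussianPDFReal 0 1

lemma inv_stdPDF (z : ℝ) : (stdPDF z)⁻¹ = √(2 * Real.pi) * Real.exp (z ^ 2 / 2) := by
  rw [stdPDF, mul_inv, inv_inv, neg_div, Real.exp_neg, inv_inv]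

lemma stdCDF_mono : Monotone stdCDF := fun _ _ hzw =>
  setIntegral_mono_set integrable_stdPDF.integrableOn
    (Eventually.of_forall fun x => by rw [stdPDF]; positivity)
    (Eventually.of_forall (Set.Iic_subset_Iic.mpr hzw))

lemma stdCDF_zero : stdCDF 0 = 1 / 2 := by
  have hsymm : ∫ t in Set.Iic (0 : ℝ), stdPDF t = ∫ t in Set.Ioi (0 : ℝ), stdPDF t := by
    rw [← neg_zero, ← integral_comp_neg_Iic]
    simp [stdPDF]
  have htotal : (∫ t in Set.Iic (0 : ℝ), stdPDF t) + ∫ t in Set.Ioi (0 : ℝ), stdPDF t = 1 := by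
    rw [intervalIntegral.integral_Iic_add_Ioi integrable_stdPDF.integrableOn
      integrable_stdPDF.integrableOn, stdPDF_eq_gaussianPDFReal]
    exact integral_gaussianPDFReal_eq_one 0 one_ne_zero
  rw [stdCDF]
  linarith

lemma le_millsTau_of_nonpos {σ x : ℝ} (hσ : 0 < σ) (hx : x ≤ 0) :
    √(2 * Real.pi) / (2 * σ) * Real.exp ((x / σ) ^ 2 / 2) ≤ millsTau σ x := by
  have hΦ : stdCDF (x / σ) ≤ 1 / 2 :=
    stdCDF_zero ▸ stdCDF_mono (div_nonpos_of_nonpos_of_nonneg hx hσ.le)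
  calc √(2 * Real.pi) / (2 * σ) * Real.exp ((x / σ) ^ 2 / 2)
      = 1 / σ * (1 / 2) * (√(2 * Real.pi) * Real.exp ((x / σ) ^ 2 / 2)) := by ring
    _ ≤ 1 / σ * (1 - stdCDF (x / σ)) * (√(2 * Real.pi) * Real.exp ((x / σ) ^ 2 / 2)) := by
      gcongr
      linarith
    _ = millsTau σ x := by rw [millsTau, div_eq_mul_inv _ (stdPDF _), inv_stdPDF]

lemma tendsto_gaussianPDFReal_mul_millsTau_rpow_atBot (μ : ℝ) {v : ℝ≥0} {σ ε : ℝ}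
    (hσ : 0 < σ) (hv : (v : ℝ) = σ ^ 2) (hε : 0 < ε) :
    Tendsto (fun x => gaussianPDFReal μ v x * millsTau σ x ^ (1 + ε)) atBot atTop := by
  set a := √(2 * Real.pi) / (2 * σ)
  set b := (√(2 * Real.pi * σ ^ 2))⁻¹
  set q : ℝ → ℝ := fun x => ((1 + ε) * x ^ 2 - (x - μ) ^ 2) / (2 * σ ^ 2)
  have hq : Tendsto q atBot atTop := by
    have hq_eq : q = fun x => (x * (ε * x + 2 * μ) - μ ^ 2) / (2 * σ ^ 2) := by
      funext x; simp only [q]; ring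
    rw [hq_eq]
    refine Tendsto.atTop_div_const (by positivity) (tendsto_atTop_add_const_right _ _ ?_)
    exact tendsto_id.atBot_mul_atBot₀
      (tendsto_atBot_add_const_right _ _ ((tendsto_const_mul_atBot_of_pos hε).mpr tendsto_id))
  have hlower : ∀ x ≤ 0,
      b * a ^ (1 + ε) * Real.exp (q x) ≤ gaussianPDFReal μ v x * millsTau σ x ^ (1 + ε) := by
    intro x hx
    have hq_split : q x = -(x - μ) ^ 2 / (2 * σ ^ 2) + (x / σ) ^ 2 / 2 * (1 + ε) := by
      simp only [q]; field_simp; ring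
    calc b * a ^ (1 + ε) * Real.exp (q x)
        = b * Real.exp (-(x - μ) ^ 2 / (2 * σ ^ 2)) *
            (a * Real.exp ((x / σ) ^ 2 / 2)) ^ (1 + ε) := by
          rw [Real.mul_rpow (by positivity) (by positivity), ← Real.exp_mul, hq_split,
            Real.exp_add]
          ring
      _ ≤ gaussianPDFReal μ v x * millsTau σ x ^ (1 + ε) := by
          rw [gaussianPDFReal, hv]
          gcongr
          exact le_millsTau_of_nonpos hσ hx
  exact tendsto_atTop_mono' _ (eventually_atBot.2 ⟨0, hlower⟩)
    ((Real.tendsto_exp_atTop.comp hq).const_mul_atTop (by positivity))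

lemma lintegral_eq_top_of_tendsto_atBot {f : ℝ → ℝ≥0∞} (hf : Tendsto f atBot (𝓝 ∞)) :
    ∫⁻ x, f x = ∞ := by
  obtain ⟨A, hA⟩ := eventually_atBot.1 (hf.eventually (eventually_gt_nhds ENNReal.one_lt_top))
  refine eq_top_iff.2 ?_
  calc ∞ = ∫⁻ _ in Set.Iic A, 1 := by simp
    _ ≤ ∫⁻ x in Set.Iic A, f x := setLIntegral_mono' measurableSet_Iic fun x hx => (hA x hx).le
    _ ≤ ∫⁻ x, f x := setLIntegral_le_lintegral _ _

/-- If ξ ~ N(π, σ²) with σ > 0, then E[τ̂(ξ)^{1+ε}] = ∞ for every ε > 0 and every π. -/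
theorem stmt1 (π σ : ℝ) (hσ : 0 < σ) (ε : ℝ) (hε : 0 < ε) :
    ∫⁻ x, ENNReal.ofReal (millsTau σ x ^ (1 + ε)) ∂(gaussianReal π ⟨σ ^ 2, sq_nonneg σ⟩)
      = ⊤ := by
  set v : ℝ≥0 := ⟨σ ^ 2, sq_nonneg σ⟩
  have hv : (v : ℝ) = σ ^ 2 := rfl
  have hv0 : v ≠ 0 := by rw [← NNReal.coe_ne_zero, hv]; positivity
  rw [gaussianReal_of_var_ne_zero π hv0, lintegral_withDensity_eq_lintegral_mul_non_measurable _
    (measurable_gaussianPDF π v) (Eventually.of_forall fun _ => gaussianPDF_lt_top)]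
  refine lintegral_eq_top_of_tendsto_atBot ((ENNReal.tendsto_ofReal_atTop.comp
    (tendsto_gaussianPDFReal_mul_millsTau_rpow_atBot π hσ hv hε)).congr fun x => ?_)
  exact ENNReal.ofReal_mul (gaussianPDFReal_nonneg π v x)
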